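/- arXiv:1812.11101 — 2 statements merged into one kernel-verified Lean document; each statement's English description precedes it below -/
import Mathlib

section
/- As h → ∞, F_1(h) = 1 − (h + 2/h + O(1/h³)) φ(h); that is, there exist constants C > 0 and h₀ such that for all h ≥ h₀, | F_1(h) − 1 + (h + 2/h)φ(h) | ≤ C φ(h)/h³, where F_1(h) = Φ(h)² − φ(h)[hΦ(h) + φ(h)]. -/
open MeasureTheory ProbabilityTheory Real Set Filter

/-- The standard normal density `φ(x) = (2π)^{-1/2} exp(-x²/2)`. -/
noncomputable def stdPhi (x : ℝ) : ℝ := (Real.sqrt (2 * Real.pi))⁻¹ * Real.exp (-x ^ 2 / 2)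

/-- The standard normal distribution function `Φ(x) = ∫_{-∞}^x φ(t) dt`. -/
noncomputable def stdCdf (x : ℝ) : ℝ := ∫ t in Set.Iic x, stdPhi t

/-!
Write `Q = 1 - Φ` for the Gaussian tail. Substituting `Φ = 1 - Q`, the error term becomes
`Q² - φ²/h² + 2φ/h³ + r (hφ - 2)`, where `r = Q - (1/h - 1/h³) φ` is the remainder of the
asymptotic expansion of Mills' ratio. Since `(1/t - 1/t³) φ(t)` has derivative `-(1 - 3/t⁴) φ(t)`,
`r = ∫_h^∞ 3 φ(t)/t⁴ dt`, which lies between `0` and `(3/h⁵) ∫_h^∞ t φ(t) dt = 3φ/h⁵`.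
Together with `0 ≤ Q ≤ φ/h` and `hφ ≤ 1`, every term is `O(φ/h³)`.
-/

open scoped Topology

noncomputable def stdTail (h : ℝ) : ℝ := ∫ t in Ioi h, stdPhi t

lemma stdPhi_eq_gaussianPDFReal : stdPhi = gaussianPDFReal 0 1 := by
  ext x
  simp [stdPhi, gaussianPDFReal]

lemma stdPhi_pos (x : ℝ) : 0 < stdPhi x := by
  rw [stdPhi_eq_gaussianPDFReal]
  exact gaussianPDFReal_pos 0 1 x one_ne_zero

lemma integrable_stdPhi : Integrable stdPhi :=
  stdPhi_eq_gaussianPDFReal ▸ integrable_gaussianPDFReal 0 1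

lemma measurable_stdPhi : Measurable stdPhi :=
  stdPhi_eq_gaussianPDFReal ▸ measurable_gaussianPDFReal 0 1

lemma integral_stdPhi : ∫ x, stdPhi x = 1 :=
  stdPhi_eq_gaussianPDFReal ▸ integral_gaussianPDFReal_eq_one 0 one_ne_zero

lemma hasDerivAt_stdPhi (x : ℝ) : HasDerivAt stdPhi (-x * stdPhi x) x := by
  have hquad : HasDerivAt (fun y : ℝ => -y ^ 2 / 2) (-x) x :=
    ((hasDerivAt_pow 2 x).neg.div_const 2).congr_deriv (by ring)
  exact (hquad.exp.const_mul (Real.sqrt (2 * Real.pi))⁻¹).congr_deriv (by unfold stdPhi; ring)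

lemma tendsto_stdPhi_atTop : Tendsto stdPhi atTop (𝓝 0) := by
  have h : Tendsto (fun x : ℝ => -x ^ 2 / 2) atTop atBot :=
    (tendsto_neg_atBot_iff.2 (tendsto_pow_atTop two_ne_zero)).atBot_div_const two_pos
  have hφ := (tendsto_exp_atBot.comp h).const_mul (Real.sqrt (2 * Real.pi))⁻¹
  rw [mul_zero] at hφ
  exact hφ

lemma mul_stdPhi_le_one (x : ℝ) : x * stdPhi x ≤ 1 := by
  have hsqrt : 1 ≤ Real.sqrt (2 * Real.pi) :=
    Real.one_le_sqrt.2 (by linarith [Real.pi_gt_three])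
  have hx : x ≤ Real.exp (x ^ 2 / 2) := by
    nlinarith [Real.add_one_le_exp (x ^ 2 / 2), sq_nonneg (x - 1)]
  have hexp : x * Real.exp (-x ^ 2 / 2) ≤ 1 := by
    rw [neg_div, Real.exp_neg, ← div_eq_mul_inv, div_le_one (Real.exp_pos _)]
    exact hx
  calc x * stdPhi x = (Real.sqrt (2 * Real.pi))⁻¹ * (x * Real.exp (-x ^ 2 / 2)) := by
        simp only [stdPhi]; ring
    _ ≤ (Real.sqrt (2 * Real.pi))⁻¹ * 1 := mul_le_mul_of_nonneg_left hexp (by positivity)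
    _ ≤ 1 := by simpa using inv_le_one_of_one_le₀ hsqrt

lemma stdCdf_eq_one_sub_stdTail (h : ℝ) : stdCdf h = 1 - stdTail h := by
  have := intervalIntegral.integral_Iic_add_Ioi (b := h)
    integrable_stdPhi.integrableOn integrable_stdPhi.integrableOn
  rw [integral_stdPhi] at this
  rw [stdCdf, stdTail]
  linarith

lemma stdTail_nonneg (h : ℝ) : 0 ≤ stdTail h :=
  setIntegral_nonneg measurableSet_Ioi fun x _ => (stdPhi_pos x).le

lemma hasDerivAt_neg_stdPhi (x : ℝ) : HasDerivAt (fun t => -stdPhi t) (x * stdPhi x) x :=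
  (hasDerivAt_stdPhi x).neg.congr_deriv (by ring)

lemma integrableOn_Ioi_mul_stdPhi {h : ℝ} (hh : 0 ≤ h) :
    IntegrableOn (fun t => t * stdPhi t) (Ioi h) :=
  integrableOn_Ioi_deriv_of_nonneg' (fun x _ => hasDerivAt_neg_stdPhi x)
    (fun x hx => mul_nonneg (hh.trans hx.out.le) (stdPhi_pos x).le) tendsto_stdPhi_atTop.neg

lemma integral_Ioi_mul_stdPhi {h : ℝ} (hh : 0 ≤ h) :
    ∫ t in Ioi h, t * stdPhi t = stdPhi h := by
  simpa using integral_Ioi_of_hasDerivAt_of_tendsto' (fun x _ => hasDerivAt_neg_stdPhi x)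
    (integrableOn_Ioi_mul_stdPhi hh) tendsto_stdPhi_atTop.neg

lemma stdTail_le {h : ℝ} (hh : 0 < h) : stdTail h ≤ stdPhi h / h := by
  have hmono : ∫ t in Ioi h, stdPhi t ≤ ∫ t in Ioi h, h⁻¹ * (t * stdPhi t) := by
    refine setIntegral_mono_on integrable_stdPhi.integrableOn
      ((integrableOn_Ioi_mul_stdPhi hh.le).const_mul h⁻¹) measurableSet_Ioi fun x hx => ?_
    rw [← mul_assoc]
    exact le_mul_of_one_le_left (stdPhi_pos x).le ((one_le_inv_mul₀ hh).2 hx.out.le)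
  rwa [integral_const_mul, integral_Ioi_mul_stdPhi hh.le, inv_mul_eq_div] at hmono

lemma hasDerivAt_mills_expansion {x : ℝ} (hx : x ≠ 0) :
    HasDerivAt (fun t => -((t⁻¹ - (t ^ 3)⁻¹) * stdPhi t)) ((1 - 3 / x ^ 4) * stdPhi x) x := by
  have hpoly : HasDerivAt (fun t : ℝ => t⁻¹ - (t ^ 3)⁻¹)
      (-(x ^ 2)⁻¹ - -(↑3 * x ^ 2) / (x ^ 3) ^ 2) x :=
    (hasDerivAt_inv hx).sub ((hasDerivAt_pow 3 x).inv (pow_ne_zero 3 hx))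
  refine (hpoly.mul (hasDerivAt_stdPhi x)).neg.congr_deriv ?_
  field_simp
  ring

lemma tendsto_mills_expansion_atTop :
    Tendsto (fun t : ℝ => -((t⁻¹ - (t ^ 3)⁻¹) * stdPhi t)) atTop (𝓝 0) := by
  have hpoly : Tendsto (fun t : ℝ => t⁻¹ - (t ^ 3)⁻¹) atTop (𝓝 0) := by
    simpa using (tendsto_inv_atTop_zero (𝕜 := ℝ)).sub
      (tendsto_inv_atTop_zero.comp (tendsto_pow_atTop three_ne_zero))
  simpa using (hpoly.mul tendsto_stdPhi_atTop).neg

lemma three_div_pow_four_le_of_lt {h x : ℝ} (hh : 0 < h) (hx : h < x) :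
    3 / x ^ 4 ≤ 3 / h ^ 5 * x := by
  have hx0 : 0 < x := hh.trans hx
  have hhx : h ≤ x := hx.le
  calc 3 / x ^ 4 = 3 / x ^ 5 * x := by field_simp
    _ ≤ 3 / h ^ 5 * x := by gcongr

lemma integrableOn_Ioi_three_div_pow_four_mul_stdPhi {h : ℝ} (hh : 0 < h) :
    IntegrableOn (fun t => 3 / t ^ 4 * stdPhi t) (Ioi h) := by
  refine ((integrableOn_Ioi_mul_stdPhi hh.le).const_mul (3 / h ^ 5)).mono'
    ((measurable_const.div (measurable_id.pow_const 4)).mul measurable_stdPhi).aestronglyMeasurable ?_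
  refine (ae_restrict_iff' measurableSet_Ioi).2 (Eventually.of_forall fun x hx => ?_)
  rw [Real.norm_of_nonneg (by have := stdPhi_pos x; positivity), ← mul_assoc]
  exact mul_le_mul_of_nonneg_right (three_div_pow_four_le_of_lt hh hx) (stdPhi_pos x).le

lemma integral_Ioi_three_div_pow_four_mul_stdPhi {h : ℝ} (hh : 0 < h) :
    ∫ t in Ioi h, 3 / t ^ 4 * stdPhi t = stdTail h - (h⁻¹ - (h ^ 3)⁻¹) * stdPhi h := by
  have hint : IntegrableOn (fun t => (1 - 3 / t ^ 4) * stdPhi t) (Ioi h) :=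
    (integrable_stdPhi.integrableOn.sub (integrableOn_Ioi_three_div_pow_four_mul_stdPhi hh)).congr_fun
      (fun t _ => by simp only [Pi.sub_apply]; ring) measurableSet_Ioi
  have hexpansion : ∫ t in Ioi h, (1 - 3 / t ^ 4) * stdPhi t = (h⁻¹ - (h ^ 3)⁻¹) * stdPhi h := by
    simpa using integral_Ioi_of_hasDerivAt_of_tendsto'
      (fun x hx => hasDerivAt_mills_expansion (hh.trans_le hx).ne') hint
      tendsto_mills_expansion_atTop
  calc ∫ t in Ioi h, 3 / t ^ 4 * stdPhi t
      = ∫ t in Ioi h, (stdPhi t - (1 - 3 / t ^ 4) * stdPhi t) := by congr 1; ext t; ring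
    _ = stdTail h - (h⁻¹ - (h ^ 3)⁻¹) * stdPhi h := by
      rw [integral_sub integrable_stdPhi.integrableOn hint, hexpansion, stdTail]

lemma le_stdTail {h : ℝ} (hh : 0 < h) : (h⁻¹ - (h ^ 3)⁻¹) * stdPhi h ≤ stdTail h := by
  rw [← sub_nonneg, ← integral_Ioi_three_div_pow_four_mul_stdPhi hh]
  exact setIntegral_nonneg measurableSet_Ioi fun x _ => by have := stdPhi_pos x; positivity

lemma stdTail_le_add {h : ℝ} (hh : 0 < h) :
    stdTail h ≤ (h⁻¹ - (h ^ 3)⁻¹) * stdPhi h + 3 / h ^ 5 * stdPhi h := by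
  rw [← sub_le_iff_le_add', ← integral_Ioi_three_div_pow_four_mul_stdPhi hh]
  calc ∫ t in Ioi h, 3 / t ^ 4 * stdPhi t ≤ ∫ t in Ioi h, 3 / h ^ 5 * (t * stdPhi t) := by
        refine setIntegral_mono_on (integrableOn_Ioi_three_div_pow_four_mul_stdPhi hh)
          ((integrableOn_Ioi_mul_stdPhi hh.le).const_mul _) measurableSet_Ioi fun x hx => ?_
        rw [← mul_assoc]
        exact mul_le_mul_of_nonneg_right (three_div_pow_four_le_of_lt hh hx) (stdPhi_pos x).le
    _ = 3 / h ^ 5 * stdPhi h := by rw [integral_const_mul, integral_Ioi_mul_stdPhi hh.le]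

lemma F1_error_eq {h φ Q : ℝ} (hh : h ≠ 0) :
    ((1 - Q) ^ 2 - φ * (h * (1 - Q) + φ)) - 1 + (h + 2 / h) * φ
      = Q ^ 2 - φ ^ 2 / h ^ 2 + 2 * φ / h ^ 3 + (Q - (h⁻¹ - (h ^ 3)⁻¹) * φ) * (h * φ - 2) := by
  field_simp
  ring

lemma abs_F1_error_le {h φ Q : ℝ} (hh : 1 ≤ h) (hφ : 0 ≤ φ) (hhφ : h * φ ≤ 1)
    (hQ₀ : 0 ≤ Q) (hQ : Q ≤ φ / h) (hQlo : (h⁻¹ - (h ^ 3)⁻¹) * φ ≤ Q)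
    (hQhi : Q ≤ (h⁻¹ - (h ^ 3)⁻¹) * φ + 3 / h ^ 5 * φ) :
    |((1 - Q) ^ 2 - φ * (h * (1 - Q) + φ)) - 1 + (h + 2 / h) * φ| ≤ 5 * φ / h ^ 3 := by
  have h0 : 0 < h := one_pos.trans_le hh
  rw [F1_error_eq h0.ne']
  set r := Q - (h⁻¹ - (h ^ 3)⁻¹) * φ
  have hφsq : φ ^ 2 / h ^ 2 ≤ φ / h ^ 3 :=
    calc φ ^ 2 / h ^ 2 = (h * φ) * (φ / h ^ 3) := by field_simp
      _ ≤ 1 * (φ / h ^ 3) := by gcongr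
      _ = φ / h ^ 3 := one_mul _
  have hQsq : Q ^ 2 ≤ φ ^ 2 / h ^ 2 := by
    rw [← div_pow]; exact pow_le_pow_left₀ hQ₀ hQ 2
  have hr₀ : 0 ≤ r := sub_nonneg.2 hQlo
  have hr3 : r ≤ 3 * (φ / h ^ 3) :=
    calc r ≤ 3 / h ^ 5 * φ := sub_le_iff_le_add'.2 hQhi
      _ = 3 * (φ / h ^ 3) / h ^ 2 := by field_simp
      _ ≤ 3 * (φ / h ^ 3) := div_le_self (by positivity) (one_le_pow₀ hh)
  have hrlo : -2 * r ≤ r * (h * φ - 2) := by nlinarith [mul_nonneg hr₀ (mul_nonneg h0.le hφ)]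
  have hrhi : r * (h * φ - 2) ≤ 0 := mul_nonpos_of_nonneg_of_nonpos hr₀ (by linarith)
  have ha : 0 ≤ φ / h ^ 3 := by positivity
  rw [abs_le, mul_div_assoc, mul_div_assoc]
  constructor <;> linarith [sq_nonneg Q]

/-- As `h → ∞`, `F_1(h) = 1 - (h + 2/h + O(1/h³)) φ(h)`, where
`F_1(h) = Φ(h)² - φ(h)(hΦ(h) + φ(h))`. -/
theorem F1_asymptotics :
    ∃ C > (0 : ℝ), ∃ h₀ : ℝ, ∀ h ≥ h₀,
      |(stdCdf h ^ 2 - stdPhi h * (h * stdCdf h + stdPhi h)) - 1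
          + (h + 2 / h) * stdPhi h| ≤ C * stdPhi h / h ^ 3 := by
  refine ⟨5, by norm_num, 1, fun h hh => ?_⟩
  have h0 : 0 < h := one_pos.trans_le hh
  rw [stdCdf_eq_one_sub_stdTail]
  exact abs_F1_error_le hh (stdPhi_pos h).le (mul_stdPhi_le_one h) (stdTail_nonneg h)
    (stdTail_le h0) (le_stdTail h0) (stdTail_le_add h0)
end

section
/- Fix c ≥ 1, set β = 1/(c + 2), and define ξ₃(t) = (1 + c²)^{−1/2} · [ W(t + 1) + c·W(t + (c+1)β) − c·W(t + β) − W(t) ] for t ≥ 0, where W is a standard Brownian motion. Then for all t, t' ≥ 0: E[ξ₃(t)] = 0, E[ξ₃(t)²] = 1, and E[ξ₃(t)ξ₃(t')] = ρ₃(t − t'), where ρ₃(t) = 1 − |t| for 0 ≤ |t| ≤ β; ρ₃(t) = (1+c)·(1 + c²β − |t|(1+c))/(1 + c²) for β ≤ |t| ≤ cβ; ρ₃(t) = (1 + c + c²β − |t|(1 + 2c))/(1 + c²) for cβ ≤ |t| ≤ (c+1)β; ρ₃(t) = (1 − |t|)/(1 + c²) for (c+1)β ≤ |t| ≤ 1;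 and ρ₃(t) = 0 for |t| ≥ 1. -/
open MeasureTheory ProbabilityTheory Real Set Filter

/-- `W` is a standard Brownian motion (Wiener process) on the probability space `(Ω, μ)`:
a Gaussian process with `W(0) = 0`, mean zero and covariance `E[W(s)W(t)] = min s t`
for `s, t ≥ 0`. -/
def IsStdBM {Ω : Type*} [MeasurableSpace Ω] (μ : Measure Ω) (W : ℝ → Ω → ℝ) : Prop :=
  IsProbabilityMeasure μ ∧
  (∀ t, Measurable (W t)) ∧
  (∀ ω, W 0 ω = 0) ∧
  (∀ (n : ℕ) (t c : Fin n → ℝ), ∃ v : NNReal,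
      Measure.map (fun ω => ∑ i, c i * W (t i) ω) μ = gaussianReal 0 v) ∧
  (∀ t, 0 ≤ t → ∫ ω, W t ω ∂μ = 0) ∧
  (∀ s t, 0 ≤ s → 0 ≤ t → ∫ ω, W s ω * W t ω ∂μ = min s t)

/-- The correlation function `ρ₃` of the process `ξ₃` built from a standard Brownian
motion with parameter `c ≥ 1` and `β = 1/(c + 2)`. -/
noncomputable def rho3 (c t : ℝ) : ℝ :=
  if |t| ≤ 1 / (c + 2) then 1 - |t|
  else if |t| ≤ c * (1 / (c + 2)) then
    (1 + c) * (1 + c ^ 2 * (1 / (c + 2)) - |t| * (1 + c)) / (1 + c ^ 2)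
  else if |t| ≤ (c + 1) * (1 / (c + 2)) then
    (1 + c + c ^ 2 * (1 / (c + 2)) - |t| * (1 + 2 * c)) / (1 + c ^ 2)
  else if |t| ≤ 1 then (1 - |t|) / (1 + c ^ 2)
  else 0

/-!
Up to the factor `(1 + c²)^{-1/2}`, `ξ₃(t)` is the combination `∑ᵢ aᵢ W(t + sᵢ)` with coefficients
`a = (1, c, -c, -1)` and shifts `s = (1, (c+1)β, β, 0)`. Its mean vanishes, and by bilinearity its
covariance is `∑ᵢⱼ aᵢ aⱼ min(t + sᵢ, t' + sⱼ)` (the Gaussian marginals make every `W(t)` square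
integrable). This kernel is symmetric in `t, t'`; for `t' ≤ t` each of its sixteen minima is
resolved on each of the intervals cut out by `β ≤ cβ ≤ (c+1)β ≤ 1` (this order is where `c ≥ 1`
enters), and on each of them the kernel is `(1 + c²) ρ₃(t - t')`.
-/

namespace IsStdBM

variable {Ω : Type*} [MeasurableSpace Ω] {μ : Measure Ω} {W : ℝ → Ω → ℝ}

lemma memLp_two (hW : IsStdBM μ W) (t : ℝ) : MemLp (W t) 2 μ := by
  obtain ⟨-, hmeas, -, hgauss, -⟩ := hW
  obtain ⟨v, hv⟩ := hgauss 1 ![t] ![1]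
  simp only [Finset.univ_unique, Fin.default_eq_zero, Fin.isValue, Matrix.cons_val_fin_one,
    one_mul, Finset.sum_singleton] at hv
  have hL2 : MemLp id 2 (μ.map (W t)) := hv ▸ memLp_id_gaussianReal 2
  exact hL2.comp_of_map (hmeas t).aemeasurable

lemma integrable (hW : IsStdBM μ W) (t : ℝ) : Integrable (W t) μ :=
  haveI := hW.1
  (hW.memLp_two t).integrable one_le_two

lemma integrable_mul (hW : IsStdBM μ W) (s t : ℝ) :
    Integrable (fun ω => W s ω * W t ω) μ :=
  (hW.memLp_two s).integrable_mul (hW.memLp_two t)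

variable {ι κ : Type*} [Fintype ι] [Fintype κ]

lemma integral_sum_mul_eq_zero (hW : IsStdBM μ W) (a x : ι → ℝ) (hx : ∀ i, 0 ≤ x i) :
    ∫ ω, ∑ i, a i * W (x i) ω ∂μ = 0 := by
  rw [integral_finsetSum _ fun i _ => (hW.integrable (x i)).const_mul (a i)]
  obtain ⟨-, -, -, -, hmean, -⟩ := hW
  simp [integral_const_mul, hmean _ (hx _)]

lemma integral_sum_mul_sum (hW : IsStdBM μ W) (a x : ι → ℝ) (b y : κ → ℝ)
    (hx : ∀ i, 0 ≤ x i) (hy : ∀ j, 0 ≤ y j) :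
    ∫ ω, (∑ i, a i * W (x i) ω) * (∑ j, b j * W (y j) ω) ∂μ
      = ∑ i, ∑ j, a i * b j * min (x i) (y j) := by
  have hprod : ∀ ω, (∑ i, a i * W (x i) ω) * (∑ j, b j * W (y j) ω)
      = ∑ i, ∑ j, a i * b j * (W (x i) ω * W (y j) ω) := fun ω => by
    rw [Finset.sum_mul_sum]
    exact Finset.sum_congr rfl fun i _ => Finset.sum_congr rfl fun j _ => by ring
  simp_rw [hprod]
  rw [integral_finsetSum _ fun i _ => integrable_finsetSum _ fun j _ =>
    (hW.integrable_mul _ _).const_mul _]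
  refine Finset.sum_congr rfl fun i _ => ?_
  rw [integral_finsetSum _ fun j _ => (hW.integrable_mul _ _).const_mul _]
  refine Finset.sum_congr rfl fun j _ => ?_
  obtain ⟨-, -, -, -, -, hcov⟩ := hW
  rw [integral_const_mul, hcov _ _ (hx i) (hy j)]

end IsStdBM

noncomputable def xi3Coeff (c : ℝ) : Fin 4 → ℝ := ![1, c, -c, -1]

noncomputable def xi3Shift (c : ℝ) : Fin 4 → ℝ := ![1, (c + 1) * (1 / (c + 2)), 1 / (c + 2), 0]

lemma xi3Shift_nonneg {c : ℝ} (hc : -1 ≤ c) (i : Fin 4) : 0 ≤ xi3Shift c i := by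
  have h1 : 0 ≤ c + 1 := by linarith
  have h2 : 0 ≤ c + 2 := by linarith
  fin_cases i <;> simp only [xi3Shift, Fin.zero_eta, Fin.mk_one, Fin.reduceFinMk,
    Matrix.cons_val] <;> positivity

lemma rho3_zero {c : ℝ} (hc : 0 ≤ c + 2) : rho3 c 0 = 1 := by
  simp [rho3, hc]

lemma rho3_neg (c t : ℝ) : rho3 c (-t) = rho3 c t := by
  simp only [rho3, abs_neg]

lemma sum_xi3Coeff_mul_min {c : ℝ} (hc : 1 ≤ c) (t t' : ℝ) :
    ∑ i, ∑ j, xi3Coeff c i * xi3Coeff c j * min (t + xi3Shift c i) (t' + xi3Shift c j)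
      = (1 + c ^ 2) * rho3 c (t - t') := by
  wlog h : t' ≤ t generalizing t t'
  · rw [← neg_sub, rho3_neg, ← this t' t (by linarith), Finset.sum_comm]
    exact Finset.sum_congr rfl fun i _ => Finset.sum_congr rfl fun j _ => by
      rw [min_comm, mul_comm (xi3Coeff c j)]
  have hβ : 0 < 1 / (c + 2) := by positivity
  have hcβ : 1 / (c + 2) ≤ c * (1 / (c + 2)) := le_mul_of_one_le_left hβ.le hc
  have hsum : c * (1 / (c + 2)) + 2 * (1 / (c + 2)) = 1 := by field_simp
  simp only [Fin.sum_univ_four, xi3Coeff, xi3Shift, Matrix.cons_val]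
  rw [rho3, abs_of_nonneg (sub_nonneg.2 h)]
  split_ifs <;> simp (disch := grind) only [min_eq_left, min_eq_right] <;> field_simp <;> ring

/-- The process `ξ₃(t) = (1+c²)^{-1/2} (W(t+1) + cW(t+(c+1)β) - cW(t+β) - W(t))` has
mean `0`, variance `1` and correlation function `ρ₃`. -/
theorem xi3_moments {Ω : Type*} [MeasurableSpace Ω] (μ : Measure Ω)
    (W : ℝ → Ω → ℝ) (hW : IsStdBM μ W) (c : ℝ) (hc : 1 ≤ c) :
    let β : ℝ := 1 / (c + 2)
    let ξ : ℝ → Ω → ℝ := fun t ω =>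
      (Real.sqrt (1 + c ^ 2))⁻¹ *
        (W (t + 1) ω + c * W (t + (c + 1) * β) ω - c * W (t + β) ω - W t ω)
    ∀ t t' : ℝ, 0 ≤ t → 0 ≤ t' →
      (∫ ω, ξ t ω ∂μ) = 0 ∧ (∫ ω, (ξ t ω) ^ 2 ∂μ) = 1 ∧
        (∫ ω, ξ t ω * ξ t' ω ∂μ) = rho3 c (t - t') := by
  intro β ξ t t' ht ht'
  have hξ : ∀ s, ξ s = fun ω => (√(1 + c ^ 2))⁻¹ * ∑ i, xi3Coeff c i * W (s + xi3Shift c i) ω :=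
    fun s => funext fun ω => by
      simp only [ξ, β, Fin.sum_univ_four, xi3Coeff, xi3Shift, Matrix.cons_val]
      ring_nf
  have hshift : ∀ s, 0 ≤ s → ∀ i, 0 ≤ s + xi3Shift c i := fun s hs i =>
    add_nonneg hs (xi3Shift_nonneg (by linarith) i)
  have hcov : ∀ s s', 0 ≤ s → 0 ≤ s' → ∫ ω, ξ s ω * ξ s' ω ∂μ = rho3 c (s - s') := by
    intro s s' hs hs'
    simp_rw [hξ, mul_mul_mul_comm _ (∑ i, _), integral_const_mul,
      hW.integral_sum_mul_sum _ _ _ _ (hshift s hs) (hshift s' hs'), sum_xi3Coeff_mul_min hc,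
      ← mul_assoc, ← sq, inv_pow, Real.sq_sqrt (by positivity : (0 : ℝ) ≤ 1 + c ^ 2)]
    field_simp
  refine ⟨?_, ?_, hcov t t' ht ht'⟩
  · rw [hξ, integral_const_mul, hW.integral_sum_mul_eq_zero _ _ (hshift t ht), mul_zero]
  · simpa [sq, rho3_zero (by linarith : 0 ≤ c + 2)] using hcov t t ht ht
end
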